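/- Fix integers b ≥ 2, e ≥ 1, u ≥ 1, a positive integer h, and let g be a positive integer such that every nonnegative integer is the sum of g e-th powers of nonnegative integers, and let p be the least nonnegative integer with b^p > g. Suppose σ is the least height-h, u-attracted number for base b and exponent e, and suppose that σ has more than e + p base-b digits and that its digits in places 0 through e + p are all equal to b-1. Then the least height-(h+1), u-attracted number σ' exists and satisfies S_{e,b}(σ') = σ. -/

import Mathlib

/-- `S e b x` is the sum of the `e`-th powers of the base-`b` digits of `x`. -/
def S (e b x : ℕ) : ℕ := ((Nat.digits b x).map (fun a => a ^ e)).sum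

/-- `x` is a height-`h`, `u`-attracted number for base `b` and exponent `e`. -/
def IsHeightAttracted (e b u h x : ℕ) : Prop :=
  0 < x ∧ (S e b)^[h] x = u ∧ ∀ n < h, (S e b)^[n] x ≠ u

/-! The map `S = S_{e,b}` sends every number with more than `e + 1` digits to a smaller one, so
the orbit of `σ` stays below `σ`, and every preimage of `σ` is height-`(h+1)` attracted. Waring's
bound yields such a preimage with at most `g + ⌊σ / (b-1)^e⌋` digits; hence the least one, `σ'`,
exists and `t = S σ'`, which is height-`h` attracted, satisfies `σ ≤ t < σ + b^(e+p)`. If `t ≠ σ`,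
then since `b^(e+p+1)` divides `σ + 1`, the digit of `t` in place `e + p` is `0`; deleting it does
not change `S` and gives a height-`h` attracted number below `σ`, against the minimality of `σ`. -/

section DigitPowerSum

variable {b e : ℕ}

@[simp]
lemma S_zero : S e b 0 = 0 := by simp [S]

lemma S_of_lt (he : 1 ≤ e) {d : ℕ} (hd : d < b) : S e b d = d ^ e := by
  rcases Nat.eq_zero_or_pos d with rfl | hd0
  · simp [zero_pow (by omega : e ≠ 0)]
  · simp [S, Nat.digits_of_lt b d hd0.ne' hd]

lemma S_pos {x : ℕ} (hx : 0 < x) : 0 < S e b x := by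
  have hne : Nat.digits b x ≠ [] := Nat.digits_ne_nil_iff_ne_zero.2 hx.ne'
  have hlast := Nat.getLast_digit_ne_zero b hx.ne'
  calc 0 < ((Nat.digits b x).getLast hne) ^ e := by positivity
    _ ≤ S e b x := List.single_le_sum (fun _ _ => Nat.zero_le _) _
        (List.mem_map_of_mem (List.getLast_mem hne))

lemma S_le_length_mul (hb : 2 ≤ b) (x : ℕ) : S e b x ≤ (Nat.digits b x).length * (b - 1) ^ e := by
  unfold S
  simpa using List.sum_le_card_nsmul ((Nat.digits b x).map (· ^ e)) _ fun y hy => by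
    obtain ⟨d, hd, rfl⟩ := List.mem_map.1 hy
    exact Nat.pow_le_pow_left (Nat.le_sub_one_of_lt (Nat.digits_lt_base hb hd)) e

lemma S_add_base_pow_mul (hb : 2 ≤ b) (he : 1 ≤ e) {i k : ℕ} (hi : i < b ^ k) (m : ℕ) :
    S e b (i + b ^ k * m) = S e b i + S e b m := by
  rcases Nat.eq_zero_or_pos m with rfl | hm
  · simp
  obtain ⟨j, rfl⟩ := Nat.exists_eq_add_of_le ((Nat.digits_length_le_iff hb i).2 hi)
  rw [S, ← Nat.digits_append_zeroes_append_digits hb hm]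
  simp [S, zero_pow (by omega : e ≠ 0)]

lemma S_ofDigits (hb : 2 ≤ b) (he : 1 ≤ e) {l : List ℕ} (hl : ∀ d ∈ l, d < b) :
    S e b (Nat.ofDigits b l) = (l.map (· ^ e)).sum := by
  induction l with
  | nil => simp
  | cons d l ih =>
    have hd : d < b := hl d List.mem_cons_self
    have hS := S_add_base_pow_mul hb he (k := 1) (by simpa using hd) (Nat.ofDigits b l)
    rw [pow_one] at hS
    rw [Nat.ofDigits_cons, hS, S_of_lt he hd, ih fun x hx => hl x (List.mem_cons_of_mem d hx)]
    simp

lemma succ_mul_pow_lt_pow {c e k : ℕ} (hc : 1 ≤ c) (he : 1 ≤ e) (hk : e + 1 ≤ k) :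
    (k + 1) * c ^ e < (c + 1) ^ k := by
  have base : (e + 2) * c ^ e < (c + 1) ^ (e + 1) := by
    clear hk
    induction e, he using Nat.le_induction with
    | base => simp only [pow_succ, pow_zero, one_mul]; nlinarith
    | succ e _ ih =>
      calc (e + 1 + 2) * c ^ (e + 1) = c * ((e + 2) * c ^ e) + c ^ (e + 1) := by ring
        _ < c * (c + 1) ^ (e + 1) + (c + 1) ^ (e + 1) := by
          gcongr ?_ + ?_
          · exact Nat.mul_lt_mul_of_pos_left ih hc
          · exact Nat.pow_lt_pow_left (by omega) (by omega)
        _ = (c + 1) ^ (e + 1 + 1) := by ring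
  induction k, hk using Nat.le_induction with
  | base => simpa [add_assoc] using base
  | succ k hk ih =>
    have : c ^ e < (c + 1) ^ k := (Nat.pow_lt_pow_left (by omega) (by omega)).trans_le
      (Nat.pow_le_pow_right (by omega) (by omega))
    calc (k + 1 + 1) * c ^ e = (k + 1) * c ^ e + c ^ e := by ring
      _ < (c + 1) ^ k + (c + 1) ^ k := by omega
      _ = (c + 1) ^ k * 2 := by ring
      _ ≤ (c + 1) ^ (k + 1) := by rw [pow_succ]; exact Nat.mul_le_mul_left _ (by omega)

lemma S_lt_of_le (hb : 2 ≤ b) (he : 1 ≤ e) {m n : ℕ} (hn : b ^ (e + 1) ≤ n) (hm : m ≤ n) :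
    S e b m < n := by
  have key : ∀ k, e + 1 ≤ k → (k + 1) * (b - 1) ^ e < b ^ k := fun k hk => by
    simpa [Nat.sub_add_cancel (by omega : 1 ≤ b)] using
      succ_mul_pow_lt_pow (c := b - 1) (by omega) he hk
  have hS := S_le_length_mul (e := e) hb m
  set L := (Nat.digits b m).length
  rcases le_or_gt L (e + 1) with hL | hL
  · calc S e b m ≤ (e + 1 + 1) * (b - 1) ^ e := hS.trans (Nat.mul_le_mul_right _ (by omega))
      _ < n := (key _ le_rfl).trans_le hn
  · have hm' : b ^ (L - 1) ≤ m := (Nat.lt_digits_length_iff hb m).1 (by omega)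
    calc S e b m ≤ (L - 1 + 1) * (b - 1) ^ e := hS.trans_eq (by rw [Nat.sub_add_cancel (by omega)])
      _ < n := (key _ (by omega)).trans_le (hm'.trans hm)

lemma iterate_S_lt_of_le (hb : 2 ≤ b) (he : 1 ≤ e) {n : ℕ} (hn : b ^ (e + 1) ≤ n) (k : ℕ) :
    ∀ m ≤ n, (S e b)^[k + 1] m < n := by
  induction k with
  | zero => exact fun m hm => S_lt_of_le hb he hn hm
  | succ k ih =>
    intro m hm
    rw [Function.iterate_succ_apply']
    exact S_lt_of_le hb he hn (ih m hm).le

end DigitPowerSum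

lemma ofDigits_replicate_pred_add_one {b : ℕ} (hb : 1 ≤ b) (k : ℕ) :
    Nat.ofDigits b (List.replicate k (b - 1)) + 1 = b ^ k := by
  induction k with
  | zero => simp
  | succ k ih =>
    rw [List.replicate_succ, Nat.ofDigits_cons, pow_succ', ← ih]
    have := Nat.sub_add_cancel hb
    nlinarith

lemma pow_dvd_succ_of_getD_digits_eq_pred {b n k : ℕ} (hb : 2 ≤ b)
    (hk : k ≤ (Nat.digits b n).length)
    (hd : ∀ i < k, (Nat.digits b n).getD i 0 = b - 1) : b ^ k ∣ n + 1 := by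
  have htake : (Nat.digits b n).take k = List.replicate k (b - 1) := by
    refine List.ext_getElem (by simpa using hk) fun i hi _ => ?_
    simp only [List.length_take] at hi
    have := hd i (by omega)
    rw [List.getD_eq_getElem?_getD, List.getElem?_eq_getElem (by omega), Option.getD_some] at this
    simpa using this
  have hmod : n % b ^ k + 1 = b ^ k := by
    rw [Nat.self_mod_pow_eq_ofDigits_take k n hb, htake,
      ofDigits_replicate_pred_add_one (by omega)]
  exact ⟨n / b ^ k + 1, by have := Nat.div_add_mod n (b ^ k); nlinarith⟩

section Attracted

variable {b e u h : ℕ}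

lemma isHeightAttracted_succ_iff {x : ℕ} (hx : 0 < x) :
    IsHeightAttracted e b u (h + 1) x ↔ x ≠ u ∧ IsHeightAttracted e b u h (S e b x) := by
  simp only [IsHeightAttracted, Nat.forall_lt_succ_left, Function.iterate_succ_apply,
    Function.iterate_zero_apply, hx, S_pos hx, true_and]
  tauto

lemma IsHeightAttracted.attractor_lt (hb : 2 ≤ b) (he : 1 ≤ e) {x : ℕ}
    (hx : IsHeightAttracted e b u (h + 1) x) (hxB : b ^ (e + 1) ≤ x) : u < x :=
  hx.2.1 ▸ iterate_S_lt_of_le hb he hxB h x le_rfl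

lemma IsHeightAttracted.succ_of_S_eq (hb : 2 ≤ b) (he : 1 ≤ e) {x : ℕ}
    (hx : IsHeightAttracted e b u (h + 1) x) (hxB : b ^ (e + 1) ≤ x) {y : ℕ} (hy : S e b y = x) :
    IsHeightAttracted e b u (h + 1 + 1) y := by
  have hy0 : 0 < y := Nat.pos_of_ne_zero (by rintro rfl; simp at hy; exact hx.1.ne hy)
  refine (isHeightAttracted_succ_iff hy0).2 ⟨?_, hy ▸ hx⟩
  rintro rfl
  exact (S_lt_of_le hb he hxB (hx.attractor_lt hb he hxB).le).ne hy

lemma IsHeightAttracted.of_S_eq_S (hb : 2 ≤ b) (he : 1 ≤ e) {t w : ℕ}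
    (ht : IsHeightAttracted e b u (h + 1) t) (hwB : b ^ (e + 1) ≤ w) (hS : S e b w = S e b t) :
    IsHeightAttracted e b u (h + 1) w := by
  have hw0 : 0 < w := (by positivity : 0 < b ^ (e + 1)).trans_le hwB
  have hSt := ((isHeightAttracted_succ_iff ht.1).1 ht).2
  refine (isHeightAttracted_succ_iff hw0).2 ⟨?_, hS ▸ hSt⟩
  rintro rfl
  have : (S e b)^[h + 1] w = w := by rw [Function.iterate_succ_apply, hS, hSt.2.1]
  exact (iterate_S_lt_of_le hb he hwB h w le_rfl).ne this

end Attracted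

section Waring

variable {b e g : ℕ}

lemma exists_S_eq_of_waring (hb : 2 ≤ b) (he : 1 ≤ e)
    (hwaring : ∀ m : ℕ, ∃ f : Fin g → ℕ, ∑ i, (f i) ^ e = m) (n : ℕ) :
    ∃ z, S e b z = n ∧ (Nat.digits b z).length ≤ g + n / (b - 1) ^ e := by
  have hβ : 0 < (b - 1) ^ e := pow_pos (by omega) e
  obtain ⟨f, hf⟩ := hwaring (n % (b - 1) ^ e)
  have hf_lt : ∀ i, f i < b - 1 := fun i => by
    by_contra! hi
    have h1 := Finset.single_le_sum (fun j _ => Nat.zero_le (f j ^ e)) (Finset.mem_univ i)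
    have h2 := Nat.pow_le_pow_left hi e
    have h3 := Nat.mod_lt n hβ
    omega
  set l := List.ofFn f ++ List.replicate (n / (b - 1) ^ e) (b - 1)
  have hl : ∀ d ∈ l, d < b := by
    simp only [l, List.mem_append, List.mem_ofFn, List.mem_replicate]
    rintro d (⟨i, rfl⟩ | ⟨-, rfl⟩)
    · exact (hf_lt i).trans (by omega)
    · omega
  refine ⟨Nat.ofDigits b l, ?_, ?_⟩
  · rw [S_ofDigits hb he hl]
    simp only [l, List.map_append, List.sum_append, List.map_ofFn, List.sum_ofFn,
      List.map_replicate, List.sum_replicate, smul_eq_mul, Function.comp_def, hf]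
    rw [mul_comm]
    exact Nat.mod_add_div n _
  · rw [Nat.digits_length_le_iff hb]
    simpa [l] using Nat.ofDigits_lt_base_pow_length hb hl

lemma S_lt_add_pow_of_length_digits_le (hb : 2 ≤ b) (he : 1 ≤ e) {p y n : ℕ} (hg : g < b ^ p)
    (hy : (Nat.digits b y).length ≤ g + n / (b - 1) ^ e) : S e b y < n + b ^ (e + p) :=
  calc S e b y ≤ (g + n / (b - 1) ^ e) * (b - 1) ^ e :=
        (S_le_length_mul hb y).trans (Nat.mul_le_mul_right _ hy)
    _ = g * (b - 1) ^ e + n / (b - 1) ^ e * (b - 1) ^ e := add_mul _ _ _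
    _ ≤ g * (b - 1) ^ e + n := Nat.add_le_add_left (Nat.div_mul_le_self _ _) _
    _ < b ^ p * b ^ e + n :=
        Nat.add_lt_add_right (Nat.mul_lt_mul'' hg (Nat.pow_lt_pow_left (by omega) (by omega))) n
    _ = n + b ^ (e + p) := by ring

end Waring

lemma exists_lt_isHeightAttracted_of_lt_add_pow {b e u h k σ t : ℕ} (hb : 2 ≤ b) (he : 1 ≤ e)
    (hk : e + 1 ≤ k) (hσ : b ^ (k + 1) ∣ σ + 1) (ht : IsHeightAttracted e b u (h + 1) t)
    (hσt : σ < t) (htσ : t < σ + b ^ k) : ∃ w < σ, IsHeightAttracted e b u (h + 1) w := by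
  obtain ⟨M, hM⟩ := hσ
  have hM0 : 0 < M := Nat.pos_of_ne_zero (by rintro rfl; simp at hM)
  set i := t - (σ + 1)
  have hi : i + 1 < b ^ k := by omega
  have hS : S e b (i + b ^ k * M) = S e b t := by
    have hik : i < b ^ (k + 1) := by
      have : b ^ k ≤ b ^ (k + 1) := Nat.pow_le_pow_right (by omega) (by omega)
      omega
    rw [show t = i + b ^ (k + 1) * M by omega, S_add_base_pow_mul hb he hik,
      S_add_base_pow_mul hb he (by omega : i < b ^ k)]
  refine ⟨i + b ^ k * M, ?_, ht.of_S_eq_S hb he ?_ hS⟩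
  · rw [pow_succ'] at hM
    nlinarith [Nat.mul_le_mul_right (b ^ k * M) hb, Nat.mul_le_mul_left (b ^ k) hM0]
  · calc b ^ (e + 1) ≤ b ^ k := Nat.pow_le_pow_right (by omega) hk
      _ ≤ i + b ^ k * M := by nlinarith

theorem stmt_5_general (b e u g h p σ : ℕ) (hb : 2 ≤ b) (he : 1 ≤ e) (hg : 1 ≤ g)
    (hh : 1 ≤ h)
    (hwaring : ∀ m : ℕ, ∃ f : Fin g → ℕ, ∑ i, (f i) ^ e = m)
    (hp : b ^ p > g)
    (hσ : IsHeightAttracted e b u h σ)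
    (hσmin : ∀ z : ℕ, IsHeightAttracted e b u h z → σ ≤ z)
    (hlen : e + p < (Nat.digits b σ).length)
    (hdigits : ∀ i : ℕ, i ≤ e + p → (Nat.digits b σ).getD i 0 = b - 1) :
    ∃ σ' : ℕ, IsHeightAttracted e b u (h + 1) σ' ∧
      (∀ z : ℕ, IsHeightAttracted e b u (h + 1) z → σ' ≤ z) ∧
      S e b σ' = σ := by
  obtain ⟨h, rfl⟩ : ∃ h', h = h' + 1 := ⟨h - 1, by omega⟩
  have hp0 : p ≠ 0 := by rintro rfl; simp at hp; omega
  have hσB : b ^ (e + 1) ≤ σ := (Nat.lt_digits_length_iff hb σ).1 (by omega)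
  have hdvd : b ^ (e + p + 1) ∣ σ + 1 :=
    pow_dvd_succ_of_getD_digits_eq_pred hb hlen fun i hi => hdigits i (by omega)
  obtain ⟨z, hSz, hz_len⟩ := exists_S_eq_of_waring hb he hwaring σ
  have hz : IsHeightAttracted e b u (h + 1 + 1) z := hσ.succ_of_S_eq hb he hσB hSz
  classical
  let σ' := Nat.find ⟨z, hz⟩
  have hσ' : IsHeightAttracted e b u (h + 1 + 1) σ' := Nat.find_spec ⟨z, hz⟩
  refine ⟨σ', hσ', fun y hy => Nat.find_min' _ hy, ?_⟩
  have ht := ((isHeightAttracted_succ_iff hσ'.1).1 hσ').2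
  have htσ : S e b σ' < σ + b ^ (e + p) :=
    S_lt_add_pow_of_length_digits_le hb he hp
      ((Nat.le_length_digits_le b _ _ (Nat.find_min' _ hz)).trans hz_len)
  by_contra hne
  obtain ⟨w, hwσ, hw⟩ := exists_lt_isHeightAttracted_of_lt_add_pow hb he (by omega) hdvd ht
    ((hσmin _ ht).lt_of_ne' hne) htσ
  exact (hσmin w hw).not_gt hwσ

theorem stmt_5 (b e u g h p σ : ℕ) (hb : 2 ≤ b) (he : 1 ≤ e) (hu : 1 ≤ u) (hg : 1 ≤ g)
    (hh : 1 ≤ h)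
    (hwaring : ∀ m : ℕ, ∃ f : Fin g → ℕ, ∑ i, (f i) ^ e = m)
    (hp : b ^ p > g) (hpmin : ∀ q : ℕ, b ^ q > g → p ≤ q)
    (hσ : IsHeightAttracted e b u h σ)
    (hσmin : ∀ z : ℕ, IsHeightAttracted e b u h z → σ ≤ z)
    (hlen : e + p < (Nat.digits b σ).length)
    (hdigits : ∀ i : ℕ, i ≤ e + p → (Nat.digits b σ).getD i 0 = b - 1) :
    ∃ σ' : ℕ, IsHeightAttracted e b u (h + 1) σ' ∧
      (∀ z : ℕ, IsHeightAttracted e b u (h + 1) z → σ' ≤ z) ∧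
      S e b σ' = σ :=
  stmt_5_general b e u g h p σ hb he hg hh hwaring hp hσ hσmin hlen hdigits
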